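/- Let α_1, …, α_{N+N_r−1} be pairwise distinct nonzero elements of a field F, let S_n = V G_n^{-1} and let G̃ be the N_r × (N_r−1) matrix with zero first row and Vandermonde rows (1, α_{N+i}, …, α_{N+i}^{N_r−2}) for i = 1,…,N_r−1. Then for every subset S ⊆ {1,…,N} \ {n} with |S| ≤ N_r − 1, the submatrix of S_n · G̃ consisting of the rows indexed by S has rank |S|. -/

import Mathlib

variable {F : Type} [Field F] {N r : ℕ}

/-- The `N × (r+1)` Vandermonde matrix `V` with nodes `α_1, …, α_N`. -/
def Vmat (α : Fin N → F) : Matrix (Fin N) (Fin (r + 1)) F :=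
  Matrix.of fun i j => α i ^ (j : ℕ)

/-- The `(r+1) × (r+1)` Vandermonde matrix `G_n` with row nodes
`α_n, β_1, …, β_r` (where `β_i` plays the role of `α_{N+i}`). -/
def Gmat (α : Fin N → F) (β : Fin r → F) (n : Fin N) :
    Matrix (Fin (r + 1)) (Fin (r + 1)) F :=
  Matrix.of fun i j => ((Fin.cons (α n) β : Fin (r + 1) → F) i) ^ (j : ℕ)

/-- The `(r+1) × r` matrix `G̃` whose first row is zero and whose row `i+1`
is the Vandermonde row `(1, β_i, …, β_i^{r-1})`. -/
def Gtil (β : Fin r → F) : Matrix (Fin (r + 1)) (Fin r) F :=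
  Matrix.of fun i j => ((Fin.cons 0 (fun i' => β i' ^ (j : ℕ)) : Fin (r + 1) → F) i)

/-- The matrix `S_n = V · G_n⁻¹`. -/
noncomputable def Smat (α : Fin N → F) (β : Fin r → F) (n : Fin N) :
    Matrix (Fin N) (Fin (r + 1)) F :=
  Vmat α * (Gmat α β n)⁻¹

/-! Row `i` of `S_n` is the coordinate vector of the Vandermonde row of `α_i` in the basis of
Vandermonde rows of `α_n, β_1, …, β_r`; in particular row `n` is the first unit vector. So the rows
`{n} ∪ S` of `S_n` are independent, dropping the first column keeps the rows in `S` independent,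
and multiplying by `G̃` amounts to multiplying these columns by the invertible Vandermonde matrix
of the `β`'s. -/

-- The first `m` columns form the square Vandermonde matrix of `x`.
lemma linearIndependent_Vmat_rows {m : ℕ} {x : Fin m → F} (hx : Function.Injective x)
    (hm : m ≤ r + 1) : LinearIndependent F (Vmat (r := r) x).row :=
  LinearIndependent.of_comp (LinearMap.funLeft F F (Fin.castLE hm))
    (Matrix.linearIndependent_rows_of_det_ne_zero (Matrix.det_vandermonde_ne_zero_iff.2 hx))

section Smat

variable {α : Fin N → F} {β : Fin r → F} {n : Fin N}

lemma isUnit_det_Gmat (h : Function.Injective (Fin.cons (α n) β : Fin (r + 1) → F)) :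
    IsUnit (Gmat α β n).det :=
  (Matrix.det_vandermonde_ne_zero_iff.2 h).isUnit

lemma Smat_row_self (hG : IsUnit (Gmat α β n).det) : Smat α β n n = Pi.single 0 1 := by
  have h : Smat α β n n = (Gmat α β n * (Gmat α β n)⁻¹) 0 := rfl
  rw [h, Matrix.mul_nonsing_inv _ hG]
  exact funext fun _ => Matrix.one_eq_pi_single

lemma linearIndependent_Smat_rows {m : ℕ} {t : Fin m → Fin N} (ht : Function.Injective (α ∘ t))
    (hm : m ≤ r + 1) (hG : IsUnit (Gmat α β n).det) :
    LinearIndependent F (fun i => Smat α β n (t i)) :=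
  (linearIndependent_Vmat_rows ht hm).map' (Matrix.vecMulLinear (Gmat α β n)⁻¹)
    (LinearMap.ker_eq_bot.2 (Matrix.vecMul_injective_of_isUnit
      (Matrix.isUnit_nonsing_inv_iff.2 ((Matrix.isUnit_iff_isUnit_det _).2 hG))))

end Smat

lemma LinearIndependent.fin_tail_of_fin_cons_single {k m : ℕ} {u : Fin k → Fin (m + 1) → F}
    (h : LinearIndependent F (Fin.cons (Pi.single 0 1) u : Fin (k + 1) → Fin (m + 1) → F)) :
    LinearIndependent F (fun i => Fin.tail (u i)) := by
  rw [Fintype.linearIndependent_iff] at h ⊢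
  intro g hg i
  set w := ∑ i, g i • u i
  have htail : ∀ j : Fin m, w j.succ = 0 := fun j => by
    simpa [w, Fin.tail] using congrFun hg j
  have hw : w = w 0 • Pi.single 0 1 := by
    ext j
    cases j using Fin.cases <;> simp [htail]
  simpa using h (Fin.cons (-w 0) g) (by
    rw [Fin.sum_univ_succ]
    simp only [Fin.cons_zero, Fin.cons_succ, neg_smul, ← hw]
    exact neg_add_cancel w) i.succ

lemma mul_Gtil {ι : Type*} (A : Matrix ι (Fin (r + 1)) F) (β : Fin r → F) :
    A * Gtil β = A.submatrix id Fin.succ * Matrix.vandermonde β := by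
  ext i j
  simp [Matrix.mul_apply, Fin.sum_univ_succ, Gtil, Matrix.vandermonde]

theorem Smat_mul_Gtil_rows_rank_general
    {F : Type} [Field F] (N r : ℕ)
    (α : Fin N → F) (β : Fin r → F)
    (hinj : Function.Injective (Sum.elim α β))
    (n : Fin N)
    (S : Finset (Fin N)) (hnS : n ∉ S) (hS : S.card ≤ r) :
    ((Smat α β n * Gtil β).submatrix
      (fun i : Fin S.card => ((S.orderIsoOfFin rfl i : S) : Fin N)) id).rank = S.card := by
  set s : Fin S.card → Fin N := fun i => ((S.orderIsoOfFin rfl i : S) : Fin N)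
  have hα : Function.Injective α := hinj.comp Sum.inl_injective
  have hβ : Function.Injective β := hinj.comp Sum.inr_injective
  have hG : IsUnit (Gmat α β n).det :=
    isUnit_det_Gmat (Fin.cons_injective_iff.2 ⟨fun ⟨_, hb⟩ => Sum.inr_ne_inl (hinj hb), hβ⟩)
  have hs : Function.Injective (Fin.cons n s : Fin (S.card + 1) → Fin N) :=
    Fin.cons_injective_iff.2 ⟨fun ⟨i, hi⟩ => hnS (hi ▸ (S.orderIsoOfFin rfl i).2),
      Subtype.val_injective.comp (S.orderIsoOfFin rfl).injective⟩
  have hrows : LinearIndependent F ((Smat α β n).submatrix s Fin.succ).row := by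
    refine LinearIndependent.fin_tail_of_fin_cons_single (u := fun i => Smat α β n (s i)) ?_
    rw [← Smat_row_self hG]
    convert linearIndependent_Smat_rows (t := Fin.cons n s) (hα.comp hs) (by omega) hG using 1
    exact funext (Fin.cases rfl fun _ => rfl)
  calc ((Smat α β n * Gtil β).submatrix s id).rank
      = ((Smat α β n).submatrix s Fin.succ * Matrix.vandermonde β).rank := by
        rw [Matrix.submatrix_mul _ _ s id id Function.bijective_id, Matrix.submatrix_id_id,
          mul_Gtil, Matrix.submatrix_submatrix]
        rfl
    _ = S.card := by
        rw [Matrix.rank_mul_eq_left_of_isUnit_det _ _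
          (Matrix.det_vandermonde_ne_zero_iff.2 hβ).isUnit, hrows.rank_matrix, Fintype.card_fin]

/-- For `S ⊆ [N] \ {n}` with `|S| ≤ N_r − 1 = r`, the rows of
`S_n · G̃` indexed by `S` have rank `|S|`. -/
theorem Smat_mul_Gtil_rows_rank
    {F : Type} [Field F] (N r : ℕ) (hN : 1 ≤ N)
    (α : Fin N → F) (β : Fin r → F)
    (hinj : Function.Injective (Sum.elim α β))
    (h0 : ∀ x : Fin N ⊕ Fin r, Sum.elim α β x ≠ 0)
    (n : Fin N)
    (S : Finset (Fin N)) (hnS : n ∉ S) (hS : S.card ≤ r) :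
    ((Smat α β n * Gtil β).submatrix
      (fun i : Fin S.card => ((S.orderIsoOfFin rfl i : S) : Fin N)) id).rank = S.card :=
  Smat_mul_Gtil_rows_rank_general N r α β hinj n S hnS hS
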